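/- arXiv:2210.04611 — 2 statements merged into one kernel-verified Lean document; each statement's English description precedes it below -/
import Mathlib

section
/- For every medial quandle Q, the displacement group Dis(Q) is an abelian normal subgroup of β(Q). -/
open LaurentPolynomial

set_option synthInstance.maxHeartbeats 1000000
set_option maxHeartbeats 1000000

noncomputable section

/-- The ring `Λ = ℤ[t,t⁻¹]` of Laurent polynomials with integer coefficients. -/
abbrev Λ : Type := LaurentPolynomial ℤ

/-- The variable `t ∈ Λ`. -/
abbrev tL : Λ := T 1

/-- A medial quandle structure on a type `Q`: an idempotent binary operation whose right
translations are bijections, satisfying the medial law. -/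
structure MedialQuandleStr (Q : Type*) where
  op : Q → Q → Q
  idem : ∀ x, op x x = x
  bij : ∀ y, Function.Bijective fun x => op x y
  medial : ∀ w x y z, op (op w x) (op y z) = op (op w y) (op x z)

/-- A quandle structure on a type `T`. -/
structure QuandleStr (T : Type*) where
  op : T → T → T
  idem : ∀ x, op x x = x
  bij : ∀ y, Function.Bijective fun x => op x y
  distrib : ∀ x y z, op (op x y) z = op (op x z) (op y z)

namespace MedialQuandleStr

variable {Q : Type*} (s : MedialQuandleStr Q)

/-- The translation `β_y : x ↦ x ▷ y`, as a permutation of `Q`. -/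
def β (y : Q) : Equiv.Perm Q := Equiv.ofBijective _ (s.bij y)

/-- `β(Q)`: the subgroup of permutations generated by the translations. -/
def transGroup : Subgroup (Equiv.Perm Q) := Subgroup.closure (Set.range s.β)

/-- The displacement group `Dis(Q)`, generated by the elementary displacements
`β_y β_z⁻¹`. -/
def Dis : Subgroup (Equiv.Perm Q) :=
  Subgroup.closure {d : Equiv.Perm Q | ∃ y z, d = s.β y * (s.β z)⁻¹}

/-- The orbit of `q`: the smallest subset of `Q` containing `q` and closed under the
action of `β(Q)`. -/
def orbit (q : Q) : Set Q := {x | ∃ g ∈ s.transGroup, g q = x}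

end MedialQuandleStr

section Construction

variable {M : Type*} [AddCommGroup M] [Module Λ M] {I : Type*}

/-- The carrier of the quandle `Q(N,(m_i),(X_i))`: the disjoint union of the quotients
`Q_i = N/X_i`. -/
def QCar (N : Submodule Λ M) (X : I → Submodule Λ ↥N) : Type _ :=
  Σ i : I, ↥N ⧸ X i

/-- The condition `(1-t)·X_i = 0` for all `i`. -/
def annCond (N : Submodule Λ M) (X : I → Submodule Λ ↥N) : Prop :=
  ∀ i, ∀ x ∈ X i, (1 - tL) • (x : ↥N) = 0

/-- Multiplication by `1-t`, descended from `N/X_j` to `N` (well defined since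
`(1-t)·X_j = 0`). -/
def oneSubT (N : Submodule Λ M) {X : I → Submodule Λ ↥N} (h : annCond N X) (j : I) :
    (↥N ⧸ X j) →ₗ[Λ] ↥N :=
  Submodule.liftQ (X j) ((1 - tL) • (LinearMap.id : ↥N →ₗ[Λ] ↥N))
    (fun x hx => by simpa using h j x hx)

/-- The operation of `Q(N,(m_i),(X_i))`: for `x ∈ Q_i` and `y ∈ Q_j`,
`x ▷ y = m_j - m_i + t·x + (1-t)·y + X_i ∈ Q_i`. -/
def qop (N : Submodule Λ M) (m : I → M) {X : I → Submodule Λ ↥N}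
    (hm : ∀ i j, m i - m j ∈ N) (h : annCond N X) :
    QCar N X → QCar N X → QCar N X :=
  fun x y =>
    ⟨x.1, Submodule.Quotient.mk (⟨m y.1 - m x.1, hm y.1 x.1⟩ : ↥N)
        + tL • x.2 + Submodule.Quotient.mk (oneSubT N h y.1 y.2)⟩

end Construction

/-!
Right translations of a medial quandle are automorphisms (mediality with `y = z` plus
idempotency), so conjugating a translation by any element `g` of `β(Q)` gives the translation
by `g a`; hence `g` permutes the generators of `Dis(Q)` and `Dis(Q)` is normal. Rewriting the
medial law with `β_{x ▷ z} = β_z β_x β_z⁻¹` turns it into `β_y β_z⁻¹ β_x = β_x β_z⁻¹ β_y`, a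
purely group-theoretic identity which already forces the elements `β_a β_b⁻¹` to commute.
-/

theorem commute_mul_inv_of_mul_inv_mul_symm {G ι : Type*} [Group G] {f : ι → G}
    (hf : ∀ x y z, f y * (f z)⁻¹ * f x = f x * (f z)⁻¹ * f y) (a b c d : ι) :
    Commute (f a * (f b)⁻¹) (f c * (f d)⁻¹) := by
  have hinv : (f b)⁻¹ * f a * (f d)⁻¹ = (f d)⁻¹ * f a * (f b)⁻¹ := by
    simpa only [mul_inv_rev, inv_inv, mul_assoc] using congrArg (·⁻¹) (hf b d a)
  calc f a * (f b)⁻¹ * (f c * (f d)⁻¹)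
      = f c * ((f b)⁻¹ * f a * (f d)⁻¹) := by
        rw [← mul_assoc, hf c a b]; simp only [mul_assoc]
    _ = f c * (f d)⁻¹ * (f a * (f b)⁻¹) := by
        rw [hinv]; simp only [mul_assoc]

namespace MedialQuandleStr

variable {Q : Type*} (s : MedialQuandleStr Q)

@[simp]
theorem β_apply (y x : Q) : s.β y x = s.op x y := rfl

def autGroup : Subgroup (Equiv.Perm Q) where
  carrier := {g | ∀ x y, g (s.op x y) = s.op (g x) (g y)}
  mul_mem' {g h} hg hh x y := by simp only [Equiv.Perm.mul_apply, hh x y, hg (h x) (h y)]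
  one_mem' _ _ := rfl
  inv_mem' {g} hg x y := by
    rw [Equiv.Perm.inv_eq_iff_eq, hg]
    simp only [Equiv.Perm.coe_inv, Equiv.apply_symm_apply]

theorem mem_autGroup {g : Equiv.Perm Q} :
    g ∈ s.autGroup ↔ ∀ x y, g (s.op x y) = s.op (g x) (g y) := Iff.rfl

theorem β_mem_autGroup (z : Q) : s.β z ∈ s.autGroup := fun x y => by
  simpa only [β_apply, s.idem] using s.medial x y z z

theorem transGroup_le_autGroup : s.transGroup ≤ s.autGroup :=
  (Subgroup.closure_le _).2 <| Set.range_subset_iff.2 s.β_mem_autGroup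

theorem conj_β_of_mem_autGroup {g : Equiv.Perm Q} (hg : g ∈ s.autGroup) (a : Q) :
    g * s.β a * g⁻¹ = s.β (g a) := by
  ext x
  simp only [Equiv.Perm.mul_apply, β_apply, s.mem_autGroup.1 hg, Equiv.Perm.coe_inv,
    Equiv.apply_symm_apply]

theorem β_op (x z : Q) : s.β (s.op x z) = s.β z * s.β x * (s.β z)⁻¹ :=
  (s.conj_β_of_mem_autGroup (s.β_mem_autGroup z) x).symm

theorem β_mul_inv_mul_symm (x y z : Q) :
    s.β y * (s.β z)⁻¹ * s.β x = s.β x * (s.β z)⁻¹ * s.β y := by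
  have hmedial : s.β (s.op y z) * s.β x = s.β (s.op x z) * s.β y := by
    ext w
    exact s.medial w x y z
  rw [s.β_op, s.β_op] at hmedial
  simpa only [mul_assoc, mul_right_inj, inv_mul_cancel_left] using hmedial

theorem Dis_le_transGroup : s.Dis ≤ s.transGroup := by
  refine (Subgroup.closure_le _).2 ?_
  rintro _ ⟨y, z, rfl⟩
  exact mul_mem (Subgroup.subset_closure ⟨y, rfl⟩) (inv_mem (Subgroup.subset_closure ⟨z, rfl⟩))

theorem isMulCommutative_Dis : IsMulCommutative s.Dis :=
  Subgroup.isMulCommutative_closure <| by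
    rintro _ ⟨a, b, rfl⟩ _ ⟨c, d, rfl⟩
    exact commute_mul_inv_of_mul_inv_mul_symm s.β_mul_inv_mul_symm a b c d

theorem conj_mem_Dis_of_mem_autGroup {g : Equiv.Perm Q} (hg : g ∈ s.autGroup) {d : Equiv.Perm Q}
    (hd : d ∈ s.Dis) : g * d * g⁻¹ ∈ s.Dis := by
  suffices s.Dis ≤ s.Dis.comap (MulAut.conj g).toMonoidHom from this hd
  refine (Subgroup.closure_le _).2 ?_
  rintro _ ⟨y, z, rfl⟩
  have hconj : g * (s.β y * (s.β z)⁻¹) * g⁻¹ = s.β (g y) * (s.β (g z))⁻¹ := by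
    rw [← s.conj_β_of_mem_autGroup hg, ← s.conj_β_of_mem_autGroup hg]; group
  exact Subgroup.subset_closure ⟨g y, g z, by
    simpa only [MulEquiv.coe_toMonoidHom, MulAut.conj_apply] using hconj⟩

end MedialQuandleStr

/-- For every medial quandle `Q`, the displacement group `Dis(Q)` is an
abelian subgroup of `β(Q)` which is normal in `β(Q)`. -/
theorem stmt3 {Q : Type*} (s : MedialQuandleStr Q) :
    (∀ d₁ ∈ s.Dis, ∀ d₂ ∈ s.Dis, d₁ * d₂ = d₂ * d₁) ∧
    s.Dis ≤ s.transGroup ∧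
    (∀ g ∈ s.transGroup, ∀ d ∈ s.Dis, g * d * g⁻¹ ∈ s.Dis) := by
  refine ⟨fun d₁ h₁ d₂ h₂ => ?_, s.Dis_le_transGroup,
    fun g hg d hd => s.conj_mem_Dis_of_mem_autGroup (s.transGroup_le_autGroup hg) hd⟩
  have := s.isMulCommutative_Dis
  exact setLike_mul_comm h₁ h₂
end
end

section
/- Suppose M, N, I, (m_i) and (X_i) satisfy the hypotheses of the construction Q(N,(m_i),(X_i)). For each i ∈ I let n_i ∈ N be arbitrary and set m′_i = m_i + (1−t)·n_i. Then the quandles Q(N,(m_i),(X_i)) and Q(N,(m′_i),(X_i)) are isomorphic. -/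
open LaurentPolynomial

set_option synthInstance.maxHeartbeats 1000000
set_option maxHeartbeats 1000000

noncomputable section

/-!
Translating each component `Q_i = N/X_i` by `-n_i` is an isomorphism. For `x = a ∈ Q_i` and
`y = b ∈ Q_j`, the new constant `m'_j - m'_i` exceeds `m_j - m_i` by `(1-t)(n_j - n_i)`, and this
is exactly cancelled by the translates: `t·(-n_i) + (1-t)·(-n_j) = -n_i - (1-t)(n_j - n_i)`.
-/

section Construction

variable {M : Type*} [AddCommGroup M] [Module Λ M] {I : Type*} {N : Submodule Λ M}

theorem sub_mem_of_eq_add_one_sub_smul {m m' : I → M} (hm : ∀ i j, m i - m j ∈ N) (n : I → ↥N)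
    (hm' : ∀ i, m' i = m i + (1 - tL) • (n i : M)) (i j : I) : m' i - m' j ∈ N := by
  have hsplit : m' i - m' j = (m i - m j) + (1 - tL) • ((n i : M) - n j) := by
    rw [hm' i, hm' j, smul_sub]; abel
  rw [hsplit]
  exact N.add_mem (hm i j) (N.smul_mem _ (N.sub_mem (n i).2 (n j).2))

variable {X : I → Submodule Λ ↥N}

theorem qop_mk (m : I → M) (hm : ∀ i j, m i - m j ∈ N) (h : annCond N X) (i j : I) (a b : ↥N) :
    qop N m hm h ⟨i, Submodule.Quotient.mk a⟩ ⟨j, Submodule.Quotient.mk b⟩ =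
      ⟨i, Submodule.Quotient.mk (⟨m j - m i, hm j i⟩ + tL • a + (1 - tL) • b)⟩ := rfl

def QCar.shift (n : I → ↥N) : QCar N X ≃ QCar N X :=
  Equiv.sigmaCongrRight fun i => Equiv.subRight (Submodule.Quotient.mk (n i))

theorem QCar.shift_mk (n : I → ↥N) (i : I) (a : ↥N) :
    QCar.shift n (⟨i, Submodule.Quotient.mk a⟩ : QCar N X) = ⟨i, Submodule.Quotient.mk (a - n i)⟩ :=
  rfl

theorem QCar.shift_qop {m m' : I → M} (hm : ∀ i j, m i - m j ∈ N) (hm' : ∀ i j, m' i - m' j ∈ N)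
    (h : annCond N X) (n : I → ↥N) (hm'def : ∀ i, m' i = m i + (1 - tL) • (n i : M))
    (x y : QCar N X) :
    QCar.shift n (qop N m hm h x y) = qop N m' hm' h (QCar.shift n x) (QCar.shift n y) := by
  obtain ⟨i, a⟩ := x
  obtain ⟨j, b⟩ := y
  obtain ⟨a, rfl⟩ := Submodule.Quotient.mk_surjective _ a
  obtain ⟨b, rfl⟩ := Submodule.Quotient.mk_surjective _ b
  simp only [qop_mk, QCar.shift_mk]
  congr 3
  ext
  simp only [Submodule.coe_add, Submodule.coe_sub, Submodule.coe_smul, hm'def]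
  module

end Construction

theorem stmt10_general {M : Type*} [AddCommGroup M] [Module Λ M] {I : Type*}
    (N : Submodule Λ M) (m : I → M) (X : I → Submodule Λ ↥N)
    (hm : ∀ i j, m i - m j ∈ N) (h : annCond N X)
    (n : I → ↥N) (m' : I → M)
    (hm'def : ∀ i, m' i = m i + (1 - tL) • (n i : M)) :
    ∃ (hm' : ∀ i j, m' i - m' j ∈ N) (F : QCar N X ≃ QCar N X),
      ∀ x y, F (qop N m hm h x y) = qop N m' hm' h (F x) (F y) :=
  have hm' := sub_mem_of_eq_add_one_sub_smul hm n hm'def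
  ⟨hm', QCar.shift n, QCar.shift_qop hm hm' h n hm'def⟩

/-- Replacing each `m_i` by `m'_i = m_i + (1-t)·n_i` with `n_i ∈ N`
does not change the isomorphism type of the quandle of the construction:
`Q(N,(m_i),(X_i)) ≅ Q(N,(m'_i),(X_i))`. -/
theorem stmt10 {M : Type*} [AddCommGroup M] [Module Λ M] {I : Type*} [Nonempty I]
    (N : Submodule Λ M) (m : I → M) (X : I → Submodule Λ ↥N)
    (hm : ∀ i j, m i - m j ∈ N) (h : annCond N X)
    (n : I → ↥N) (m' : I → M)
    (hm'def : ∀ i, m' i = m i + (1 - tL) • (n i : M)) :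
    ∃ (hm' : ∀ i j, m' i - m' j ∈ N) (F : QCar N X ≃ QCar N X),
      ∀ x y, F (qop N m hm h x y) = qop N m' hm' h (F x) (F y) :=
  stmt10_general N m X hm h n m' hm'def
end
end
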